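/- arXiv:2504.03062 — 2 statements merged into one kernel-verified Lean document; each statement's English description precedes it below -/
import Mathlib

section
/- The function α(t) = (sinh(2t) - 2t) / (8 sinh²(t)), extended by α(0) = 0, is a strictly monotone real-analytic bijection from ℝ onto the open interval (-1/4, 1/4). -/
/-!
Away from `0`, `α` is a quotient of analytic functions, so it is meromorphic everywhere; at `0`
the bound `|α t| ≤ |t| / 2`, a consequence of `sinh x < x cosh x` for `x > 0`, makes it
continuous, and a meromorphic function that is continuous at a point is analytic there.
Off `0` the derivative is `(t cosh t - sinh t) / (2 sinh³ t) > 0`, so `α` is strictly increasing.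
Multiplying numerator and denominator by `e^{-2t}` shows `α t → 1/4` as `t → ∞`, oddness gives
`-1/4` at `-∞`, and the intermediate value theorem identifies the range.
-/

/-- α(t) = (sinh(2t) - 2t)/(8 sinh²(t)), extended by α(0) = 0. -/
noncomputable def alphaFun (t : ℝ) : ℝ :=
  if t = 0 then 0 else (Real.sinh (2 * t) - 2 * t) / (8 * Real.sinh t ^ 2)

open Real Filter Set Topology

theorem StrictMono.range_eq_Ioo_of_tendsto {α β : Type*} [LinearOrder α] [TopologicalSpace α]
    [PreconnectedSpace α] [Nonempty α] [NoMaxOrder α] [NoMinOrder α]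
    [LinearOrder β] [TopologicalSpace β] [OrderClosedTopology β] {f : α → β} {a b : β}
    (hf : StrictMono f) (hc : Continuous f) (hbot : Tendsto f atBot (𝓝 a))
    (htop : Tendsto f atTop (𝓝 b)) : range f = Ioo a b := by
  ext y
  constructor
  · rintro ⟨x, rfl⟩
    obtain ⟨x₁, hx₁⟩ := exists_lt x
    obtain ⟨x₂, hx₂⟩ := exists_gt x
    exact ⟨(hf.monotone.le_of_tendsto hbot x₁).trans_lt (hf hx₁),
      (hf hx₂).trans_le (hf.monotone.ge_of_tendsto htop x₂)⟩
  · rintro ⟨hay, hyb⟩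
    exact mem_range_of_exists_le_of_exists_ge hc
      ((hbot.eventually_lt_const hay).exists.imp fun _ => le_of_lt)
      ((htop.eventually_const_lt hyb).exists.imp fun _ => le_of_lt)

lemma Real.sinh_lt_mul_cosh {t : ℝ} (ht : 0 < t) : sinh t < t * cosh t := by
  have hderiv (s : ℝ) : HasDerivAt (fun s => s * cosh s - sinh s) (s * sinh s) s :=
    (((hasDerivAt_id' s).mul (hasDerivAt_cosh s)).sub (hasDerivAt_sinh s)).congr_deriv (by ring)
  have hmono : StrictMonoOn (fun s => s * cosh s - sinh s) (Ici 0) := by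
    refine strictMonoOn_of_hasDerivWithinAt_pos (convex_Ici 0) (by fun_prop)
      (fun s _ => (hderiv s).hasDerivWithinAt) fun s hs => ?_
    rw [interior_Ici] at hs
    exact mul_pos hs (sinh_pos_iff.2 hs)
  simpa using hmono self_mem_Ici ht.le ht

lemma alphaFun_of_ne_zero {t : ℝ} (ht : t ≠ 0) :
    alphaFun t = (sinh (2 * t) - 2 * t) / (8 * sinh t ^ 2) :=
  if_neg ht

lemma alphaFun_neg (t : ℝ) : alphaFun (-t) = -alphaFun t := by
  rcases eq_or_ne t 0 with rfl | ht
  · simp [alphaFun]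
  · rw [alphaFun_of_ne_zero (neg_ne_zero.2 ht), alphaFun_of_ne_zero ht, mul_neg, sinh_neg,
      sinh_neg]
    ring

lemma alphaFun_mem_Icc {t : ℝ} (ht : 0 ≤ t) : alphaFun t ∈ Icc 0 (t / 2) := by
  rcases ht.eq_or_lt with rfl | ht
  · simp [alphaFun]
  have hsinh : 0 < sinh t := sinh_pos_iff.2 ht
  rw [alphaFun_of_ne_zero ht.ne', mem_Icc, div_le_iff₀ (by positivity)]
  refine ⟨div_nonneg ?_ (by positivity), ?_⟩
  · linarith [self_lt_sinh_iff.2 (by linarith : 0 < 2 * t)]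
  -- `sinh x < x cosh x` at `x = 2t`, and `cosh 2t - 1 = 2 sinh² t`
  · nlinarith [sinh_lt_mul_cosh (by linarith : 0 < 2 * t), cosh_sq t, cosh_two_mul t]

lemma abs_alphaFun_le (t : ℝ) : |alphaFun t| ≤ |t| / 2 := by
  rcases le_total 0 t with ht | ht
  · obtain ⟨h0, h1⟩ := alphaFun_mem_Icc ht
    rwa [abs_of_nonneg h0, abs_of_nonneg ht]
  · obtain ⟨h0, h1⟩ := alphaFun_mem_Icc (neg_nonneg.2 ht)
    rw [alphaFun_neg] at h0 h1
    rwa [abs_of_nonpos (neg_nonneg.1 h0), abs_of_nonpos ht]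

lemma hasDerivAt_alphaFun {t : ℝ} (ht : t ≠ 0) :
    HasDerivAt alphaFun ((t * cosh t - sinh t) / (2 * sinh t ^ 3)) t := by
  have hsinh : sinh t ≠ 0 := sinh_ne_zero.2 ht
  have hnum : HasDerivAt (fun s => sinh (2 * s) - 2 * s) (cosh (2 * t) * 2 - 2) t := by
    have h2 : HasDerivAt (fun s : ℝ => 2 * s) 2 t := by
      simpa using (hasDerivAt_id t).const_mul 2
    exact h2.sinh.sub h2
  have hden : HasDerivAt (fun s => 8 * sinh s ^ 2) (8 * (2 * sinh t ^ 1 * cosh t)) t :=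
    ((hasDerivAt_sinh t).pow 2).const_mul 8
  refine ((hnum.div hden (by positivity)).congr_deriv ?_).congr_of_eventuallyEq
    ((eventually_ne_nhds ht).mono fun s hs => alphaFun_of_ne_zero hs)
  rw [cosh_two_mul, sinh_two_mul]
  field_simp
  linear_combination (-4 * sinh t) * cosh_sq t

lemma deriv_alphaFun_pos {t : ℝ} (ht : t ≠ 0) : 0 < deriv alphaFun t := by
  rw [(hasDerivAt_alphaFun ht).deriv]
  rcases ht.lt_or_gt with ht | ht
  · have key := sinh_lt_mul_cosh (neg_pos.2 ht)
    rw [sinh_neg, cosh_neg] at key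
    have : sinh t ^ 3 < 0 := Odd.pow_neg (by decide) (sinh_neg_iff.2 ht)
    exact div_pos_of_neg_of_neg (by linarith) (by linarith)
  · have : 0 < sinh t := sinh_pos_iff.2 ht
    exact div_pos (by linarith [sinh_lt_mul_cosh ht]) (by positivity)

lemma continuous_alphaFun : Continuous alphaFun := by
  refine continuous_iff_continuousAt.2 fun t => ?_
  rcases eq_or_ne t 0 with rfl | ht
  · refine continuousAt_of_locally_lipschitz one_pos (1 / 2) fun s _ => ?_
    simpa [alphaFun, Real.dist_eq, div_eq_inv_mul] using abs_alphaFun_le s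
  · exact (hasDerivAt_alphaFun ht).continuousAt

lemma strictMono_alphaFun : StrictMono alphaFun := by
  refine StrictMonoOn.Iic_union_Ici (a := 0)
    (strictMonoOn_of_deriv_pos (convex_Iic 0) continuous_alphaFun.continuousOn fun t ht => ?_)
    (strictMonoOn_of_deriv_pos (convex_Ici 0) continuous_alphaFun.continuousOn fun t ht => ?_)
  · rw [interior_Iic] at ht
    exact deriv_alphaFun_pos ht.ne
  · rw [interior_Ici] at ht
    exact deriv_alphaFun_pos ht.ne'

lemma meromorphicAt_alphaFun (x : ℝ) : MeromorphicAt alphaFun x := by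
  have h : alphaFun =
      Function.update (fun t => (sinh (2 * t) - 2 * t) / (8 * sinh t ^ 2)) 0 0 := by
    funext t
    by_cases ht : t = 0 <;> simp [alphaFun, ht]
  rw [h]
  exact MeromorphicAt.update (by fun_prop) _ _

lemma analyticOnNhd_alphaFun : AnalyticOnNhd ℝ alphaFun univ := fun x _ =>
  (meromorphicAt_alphaFun x).analyticAt continuous_alphaFun.continuousAt

lemma Real.tendsto_sinh_mul_exp_neg_atTop :
    Tendsto (fun x => sinh x * exp (-x)) atTop (𝓝 (1 / 2)) := by
  have h : Tendsto (fun x => (1 - exp (-x) ^ 2) / 2) atTop (𝓝 ((1 - 0 ^ 2) / 2)) :=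
    (tendsto_const_nhds.sub (tendsto_exp_neg_atTop_nhds_zero.pow 2)).div_const 2
  rw [show ((1 : ℝ) - 0 ^ 2) / 2 = 1 / 2 by norm_num] at h
  refine h.congr fun x => ?_
  have : exp x * exp (-x) = 1 := by rw [← exp_add, add_neg_cancel, exp_zero]
  rw [sinh_eq]
  linear_combination (-1 / 2) * this

lemma tendsto_alphaFun_atTop : Tendsto alphaFun atTop (𝓝 (1 / 4)) := by
  have h2t : Tendsto (fun t : ℝ => 2 * t) atTop atTop := tendsto_id.const_mul_atTop two_pos
  have hlin : Tendsto (fun t : ℝ => 2 * t * exp (-(2 * t))) atTop (𝓝 0) := by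
    simpa [Function.comp_def] using (tendsto_pow_mul_exp_neg_atTop_nhds_zero 1).comp h2t
  have h := ((tendsto_sinh_mul_exp_neg_atTop.comp h2t).sub hlin).div
    ((tendsto_sinh_mul_exp_neg_atTop.pow 2).const_mul 8) (by norm_num)
  rw [show ((1 : ℝ) / 2 - 0) / (8 * (1 / 2) ^ 2) = 1 / 4 by norm_num] at h
  refine h.congr' ((eventually_ne_atTop 0).mono fun t ht => ?_)
  have : exp (-(2 * t)) = exp (-t) ^ 2 := by rw [← exp_nat_mul]; ring_nf
  simp only [Pi.div_apply, Function.comp_apply, this]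
  rw [alphaFun_of_ne_zero ht]
  field_simp

lemma tendsto_alphaFun_atBot : Tendsto alphaFun atBot (𝓝 (-(1 / 4))) :=
  (tendsto_alphaFun_atTop.comp tendsto_neg_atBot_atTop).neg.congr fun t => by
    simp [alphaFun_neg]

theorem alphaFun_strictMono_analytic_bijective :
    StrictMono alphaFun ∧ AnalyticOnNhd ℝ alphaFun Set.univ ∧
    Set.range alphaFun = Set.Ioo (-(1 / 4) : ℝ) (1 / 4) :=
  ⟨strictMono_alphaFun, analyticOnNhd_alphaFun, strictMono_alphaFun.range_eq_Ioo_of_tendsto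
    continuous_alphaFun tendsto_alphaFun_atBot tendsto_alphaFun_atTop⟩
end

section
/- If the maximum over u = (u₁,u₂) with u₁ ≥ |u₂| of the function ℋ(u) = u₁ a + u₂ b - ν√(u₁² - u₂²) is attained at an interior point (i.e. u₁ > |u₂|) with ν = -1, then a² - b² = 1, a ≤ -1, and there are unique A > 0 and ψ ∈ ℝ with a = -cosh(ψ), b = sinh(ψ), u₁ = A cosh(ψ), u₂ = A sinh(ψ); moreover the maximum value is 0. -/
theorem interior_maximum_normal_case (a b u₁ u₂ : ℝ) (hu : |u₂| < u₁)
    (hmax : ∀ v₁ v₂ : ℝ, |v₂| ≤ v₁ →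
      v₁ * a + v₂ * b + Real.sqrt (v₁ ^ 2 - v₂ ^ 2) ≤
        u₁ * a + u₂ * b + Real.sqrt (u₁ ^ 2 - u₂ ^ 2)) :
    a ^ 2 - b ^ 2 = 1 ∧ a ≤ -1 ∧
    (∃! p : ℝ × ℝ, 0 < p.1 ∧ a = -Real.cosh p.2 ∧ b = Real.sinh p.2 ∧
      u₁ = p.1 * Real.cosh p.2 ∧ u₂ = p.1 * Real.sinh p.2) ∧
    u₁ * a + u₂ * b + Real.sqrt (u₁ ^ 2 - u₂ ^ 2) = 0 := by
  have habs : 0 ≤ |u₂| := abs_nonneg _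
  have hu1 : 0 < u₁ := lt_of_le_of_lt habs hu
  have hd : 0 < u₁ ^ 2 - u₂ ^ 2 := by nlinarith [sq_abs u₂]
  set s := Real.sqrt (u₁ ^ 2 - u₂ ^ 2) with hs_def
  have hs2 : s ^ 2 = u₁ ^ 2 - u₂ ^ 2 := Real.sq_sqrt hd.le
  have hs_pos : 0 < s := Real.sqrt_pos.mpr hd
  -- the maximum value is 0
  have hF0 : u₁ * a + u₂ * b + s = 0 := by
    have h0 := hmax 0 0 (by simp)
    have h2 := hmax (2 * u₁) (2 * u₂)
      (by rw [abs_mul]; norm_num; nlinarith [hu.le])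
    rw [show (2*u₁)^2 - (2*u₂)^2 = 2^2 * (u₁^2-u₂^2) by ring,
      Real.sqrt_mul (by positivity), Real.sqrt_sq (by norm_num)] at h2
    simp [Real.sqrt_zero] at h0
    linarith
  -- the key inequality on the hyperbola
  have hstar : ∀ t : ℝ, a * Real.sqrt (1 + t ^ 2) + b * t + 1 ≤ 0 := by
    intro t
    have h1t : (0:ℝ) ≤ 1 + t ^ 2 := by positivity
    have hle : |t| ≤ Real.sqrt (1 + t ^ 2) := by
      rw [show |t| = Real.sqrt (t^2) by rw [Real.sqrt_sq_eq_abs]]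
      exact Real.sqrt_le_sqrt (by linarith)
    have h := hmax (Real.sqrt (1 + t ^ 2)) t hle
    rw [Real.sq_sqrt h1t, show 1 + t^2 - t^2 = (1:ℝ) by ring, Real.sqrt_one] at h
    linarith
  have ha : a ≤ -1 := by
    have h := hstar 0
    rw [show (1:ℝ) + 0^2 = 1 by norm_num, Real.sqrt_one] at h
    linarith
  have hab : 1 + b ^ 2 ≤ a ^ 2 := by
    have h := hstar b
    set S := Real.sqrt (1 + b ^ 2) with hS
    have hS2 : S ^ 2 = 1 + b ^ 2 := Real.sq_sqrt (by positivity)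
    have hS0 : 0 ≤ S := Real.sqrt_nonneg _
    have h1 : (0:ℝ) ≤ -(a*S) - (1+b^2) := by nlinarith
    have h2 : (0:ℝ) ≤ -(a*S) + (1+b^2) := by nlinarith [sq_nonneg b]
    nlinarith [mul_nonneg h1 h2]
  have hEq : (s^2 + u₂^2) * a^2 = s^2 + 2*s*u₂*b + u₂^2*b^2 := by
    have hlin : u₁ * a = -(s + u₂ * b) := by linarith
    have h2 : (u₁*a)^2 = (s + u₂*b)^2 := by rw [hlin]; ring
    have hu12 : u₁^2 = s^2 + u₂^2 := by linarith
    calc (s^2+u₂^2)*a^2 = (u₁*a)^2 := by rw [← hu12]; ring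
    _ = (s+u₂*b)^2 := h2
    _ = s^2 + 2*s*u₂*b + u₂^2*b^2 := by ring
  have hc : a ^ 2 - b ^ 2 = 1 := by
    nlinarith [hEq, hab, sq_nonneg (u₂ - b*s), sq_nonneg u₂, mul_pos hs_pos hs_pos]
  have ha2 : a^2 = 1 + b^2 := by linarith
  have hu2 : u₂ = b * s := by
    have hEq' : (s^2+u₂^2)*(1+b^2) = s^2 + 2*s*u₂*b + u₂^2*b^2 := by
      rw [← ha2]; exact hEq
    have h : (u₂ - b*s)^2 = 0 := by linear_combination hEq'
    have := sq_eq_zero_iff.mp h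
    linarith
  have hu1sq : u₁^2 = (a*s)^2 := by
    linear_combination (-(s^2)) * ha2 - hs2 + (u₂ + b*s) * hu2
  have hnas : 0 < -a * s := mul_pos (by linarith) hs_pos
  have hu1e : u₁ = -(a*s) := by
    have hfac : (u₁ + a*s) * (u₁ - a*s) = 0 := by linear_combination hu1sq
    rcases mul_eq_zero.mp hfac with h | h
    · linarith
    · nlinarith
  -- the hyperbolic data
  set ψ := Real.arsinh b with hψdef
  have hsinh : Real.sinh ψ = b := Real.sinh_arsinh b
  have hcosh : Real.cosh ψ = -a := by
    rw [hψdef, Real.cosh_arsinh, show (1:ℝ) + b^2 = (-a)^2 by nlinarith]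
    exact Real.sqrt_sq (by linarith)
  refine ⟨hc, ha, ⟨(s, ψ), ⟨hs_pos, by rw [hcosh]; ring, hsinh.symm,
    by rw [hcosh]; linarith, by rw [hsinh]; linarith⟩, ?_⟩, hF0⟩
  rintro ⟨A, φ⟩ ⟨hA, hφa, hφb, hφ1, hφ2⟩
  simp only at hφa hφb hφ1 hφ2 hA ⊢
  have hφψ : φ = ψ := by
    apply Real.sinh_injective
    rw [hsinh, ← hφb]
  have hAs : A = s := by
    rw [hφψ, hcosh] at hφ1
    have : A * (-a) = s * (-a) := by rw [← hφ1]; linarith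
    exact mul_right_cancel₀ (by linarith) this
  rw [Prod.ext_iff]
  exact ⟨hAs, hφψ⟩
end
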